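/- arXiv:1908.04222 — 4 statements merged into one kernel-verified Lean document; each statement's English description precedes it below -/
import Mathlib

section
/- Let c : (0,∞) → [0,∞) be a function such that: (i) sup_{l>1} c(l) ≤ C for some constant C; and (ii) for all 0 < h < l, c(h) ≤ (l/(l - r(h,l))) c(l), where r(h,l) := l - h·⌊l/h⌋ ∈ [0,h). Then the limit lim_{l→∞} c(l) exists and is finite. -/
open MeasureTheory Set Filter Topology

/-- If `c : (0,∞) → [0,∞)` satisfies `sup_{l>1} c(l) ≤ C` and the
almost-superadditivity `c(h) ≤ (l/(l - r(h,l))) c(l)` for `0 < h < l`, where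
`r(h,l) = l - h⌊l/h⌋`, then `lim_{l→∞} c(l)` exists and is finite. -/
theorem stmt3 (c : ℝ → ℝ) (C : ℝ)
    (hnonneg : ∀ l : ℝ, 0 < l → 0 ≤ c l)
    (hbdd : ∀ l : ℝ, 1 < l → c l ≤ C)
    (hsub : ∀ h l : ℝ, 0 < h → h < l →
      c h ≤ (l / (l - (l - h * (⌊l / h⌋ : ℝ)))) * c l) :
    ∃ L : ℝ, Tendsto c atTop (𝓝 L) := by
  have key : ∀ h l : ℝ, 0 < h → h < l → c h ≤ l / (l - h) * c l := by
    intro h l hh hl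
    have hl0 : 0 < l := hh.trans hl
    have hfloor : l - h < h * (⌊l / h⌋ : ℝ) := by
      have h1 : l / h - 1 < (⌊l / h⌋ : ℝ) := Int.sub_one_lt_floor _
      have h2 : h * (l / h - 1) < h * (⌊l / h⌋ : ℝ) :=
        mul_lt_mul_of_pos_left h1 hh
      have h3 : h * (l / h - 1) = l - h := by field_simp
      linarith
    calc c h ≤ l / (l - (l - h * (⌊l / h⌋ : ℝ))) * c l := hsub h l hh hl
      _ = l / (h * (⌊l / h⌋ : ℝ)) * c l := by rw [sub_sub_cancel]
      _ ≤ l / (l - h) * c l := by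
          have hcl : 0 ≤ c l := hnonneg l hl0
          have hlh : 0 < l - h := by linarith
          gcongr
  have hC0 : 0 ≤ C := (hnonneg 2 two_pos).trans (hbdd 2 one_lt_two)
  -- boundedness on (0,∞)
  have hub : ∀ h : ℝ, 0 < h → c h ≤ 2 * C := by
    intro h hh
    rcases le_or_gt h 1 with h1 | h1
    · have hl2 : h < 2 := by linarith
      have := key h 2 hh hl2
      have hc2 : c 2 ≤ C := hbdd 2 one_lt_two
      have hc2' : 0 ≤ c 2 := hnonneg 2 two_pos
      have hfrac : 2 / (2 - h) ≤ 2 := by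
        rw [div_le_iff₀ (by linarith)]
        nlinarith
      calc c h ≤ 2 / (2 - h) * c 2 := this
        _ ≤ 2 * C := by nlinarith
    · have := hbdd h h1
      linarith
  set S : Set ℝ := c '' Ioi 0 with hS
  have hSne : S.Nonempty := ⟨c 1, ⟨1, by norm_num, rfl⟩⟩
  have hSbdd : BddAbove S := by
    refine ⟨2 * C, ?_⟩
    rintro x ⟨h, hh, rfl⟩
    exact hub h hh
  set L : ℝ := sSup S with hL
  have hle : ∀ l : ℝ, 0 < l → c l ≤ L := fun l hl =>
    le_csSup hSbdd ⟨l, hl, rfl⟩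
  refine ⟨L, Metric.tendsto_nhds.2 ?_⟩
  intro ε hε
  obtain ⟨x, hxS, hx⟩ := exists_lt_of_lt_csSup hSne (by linarith : L - ε < L)
  obtain ⟨h, hh, rfl⟩ := hxS
  -- lower bound tends to c h
  have htend : Tendsto (fun l : ℝ => (l - h) / l * c h) atTop (𝓝 (1 * c h)) := by
    apply Tendsto.mul_const
    have : Tendsto (fun l : ℝ => 1 - h / l) atTop (𝓝 (1 - 0)) := by
      exact tendsto_const_nhds.sub (tendsto_const_nhds.div_atTop tendsto_id)
    simp only [sub_zero] at this
    apply this.congr'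
    filter_upwards [eventually_gt_atTop (0 : ℝ)] with l hl
    field_simp
  rw [one_mul] at htend
  have hev : ∀ᶠ l : ℝ in atTop, L - ε < (l - h) / l * c h :=
    htend.eventually (eventually_gt_nhds hx)
  filter_upwards [hev, eventually_gt_atTop h, eventually_gt_atTop (0 : ℝ)]
    with l hl1 hl2 hl3
  have h1 : c l ≤ L := hle l hl3
  have h2 : (l - h) / l * c h ≤ c l := by
    have := key h l hh hl2
    have hlh : 0 < l - h := by linarith
    rw [div_mul_eq_mul_div, div_le_iff₀ hl3]
    rw [div_mul_eq_mul_div, le_div_iff₀ hlh] at this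
    linarith
  rw [Real.dist_eq, abs_lt]
  constructor <;> linarith
end

section
/- Suppose c_l → c_∞ as l → +∞, where c_l = min over admissible u of (1/l)∫₀^l∫₀^l |u(x)-u(y)|²/|x-y|² dxdy, and the minimum energy over any subinterval (0,s) of a minimizer restricted there is at least s·c_s. Then for minimizers u_l of c_l and any points x_l ∈ [0,l], the cross term satisfies lim_{l→∞} (1/l) ∫₀^{x_l} ∫_{x_l}^l |u_l(x)-u_l(y)|²/|x-y|² dx dy = 0. -/
open MeasureTheory Set Filter Topology


lemma aux_coef (c : ℝ → ℝ) (cinf K : ℝ)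
    (hc : Tendsto c atTop (𝓝 cinf))
    (hK : ∀ s : ℝ, 0 < s → |c s - cinf| ≤ K) (y : ℝ → ℝ)
    (hy : ∀ᶠ l in atTop, 0 ≤ y l ∧ y l ≤ l) :
    Tendsto (fun l => (y l / l) * |c (y l) - cinf|) atTop (𝓝 0) := by
  have hK0 : 0 ≤ K := le_trans (abs_nonneg _) (hK 1 one_pos)
  rw [Metric.tendsto_atTop]
  intro ε hε
  obtain ⟨S, hS⟩ := Metric.tendsto_atTop.mp hc (ε / 2) (half_pos hε)
  set S' := max S 1 with hS'
  have hS'1 : (1:ℝ) ≤ S' := le_max_right _ _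
  have hS'0 : 0 < S' := lt_of_lt_of_le one_pos hS'1
  obtain ⟨N₀, hN₀⟩ := eventually_atTop.mp hy
  refine ⟨max (max N₀ 1) (2 * S' * (K + 1) / ε), fun l hl => ?_⟩
  have hl1 : (1:ℝ) ≤ l := le_trans (le_trans (le_max_right _ _) (le_max_left _ _)) hl
  have hl0 : (0:ℝ) < l := lt_of_lt_of_le one_pos hl1
  have hyl := hN₀ l (le_trans (le_trans (le_max_left _ _) (le_max_left _ _)) hl)
  have hcoef0 : 0 ≤ y l / l := div_nonneg hyl.1 hl0.le
  have hcoef1 : y l / l ≤ 1 := (div_le_one hl0).mpr hyl.2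
  have hterm0 : 0 ≤ (y l / l) * |c (y l) - cinf| := mul_nonneg hcoef0 (abs_nonneg _)
  rw [Real.dist_eq, sub_zero, abs_of_nonneg hterm0]
  rcases eq_or_lt_of_le hyl.1 with h0 | hpos
  · simp [← h0, hε]
  rcases le_or_gt S' (y l) with hge | hlt
  · have h1 : |c (y l) - cinf| < ε / 2 := by
      have := hS (y l) (le_trans (le_max_left _ _) hge)
      rwa [Real.dist_eq] at this
    calc (y l / l) * |c (y l) - cinf| ≤ 1 * |c (y l) - cinf| :=
          mul_le_mul_of_nonneg_right hcoef1 (abs_nonneg _)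
      _ < ε := by linarith
  · have hbl : 2 * S' * (K + 1) / ε ≤ l := le_trans (le_max_right _ _) hl
    have hbl' : 2 * S' * (K + 1) ≤ ε * l := by
      rw [div_le_iff₀ hε] at hbl; linarith
    have h1 : |c (y l) - cinf| ≤ K := hK _ hpos
    have h2 : y l / l ≤ S' / l := by gcongr
    calc (y l / l) * |c (y l) - cinf| ≤ (S' / l) * K :=
          mul_le_mul h2 h1 (abs_nonneg _) (div_nonneg hS'0.le hl0.le)
      _ < ε := by
          rw [div_mul_eq_mul_div, div_lt_iff₀ hl0]
          nlinarith

lemma aux_split (f : ℝ → ℝ → ℝ) (hf : ∀ a b, 0 ≤ f a b) (l x : ℝ)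
    (hx0 : 0 < x) (hxl : x < l)
    (hI : IntegrableOn (fun p : ℝ × ℝ => f p.1 p.2) (Set.Ioo 0 l ×ˢ Set.Ioo 0 l)) :
    (∫ a in Set.Ioo 0 x, ∫ b in Set.Ioo 0 x, f a b)
      + (∫ a in Set.Ioo x l, ∫ b in Set.Ioo x l, f a b)
      + (∫ a in Set.Ioo 0 x, ∫ b in Set.Ioo x l, f a b)
    ≤ ∫ a in Set.Ioo (0:ℝ) l, ∫ b in Set.Ioo (0:ℝ) l, f a b := by
  set F := fun p : ℝ × ℝ => f p.1 p.2 with hF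
  have hs1 : Set.Ioo 0 x ⊆ Set.Ioo 0 l := Set.Ioo_subset_Ioo le_rfl hxl.le
  have hs2 : Set.Ioo x l ⊆ Set.Ioo 0 l := Set.Ioo_subset_Ioo hx0.le le_rfl
  have hIA : IntegrableOn F (Set.Ioo 0 x ×ˢ Set.Ioo 0 x) := hI.mono_set (Set.prod_mono hs1 hs1)
  have hIB : IntegrableOn F (Set.Ioo x l ×ˢ Set.Ioo x l) := hI.mono_set (Set.prod_mono hs2 hs2)
  have hID : IntegrableOn F (Set.Ioo 0 x ×ˢ Set.Ioo x l) := hI.mono_set (Set.prod_mono hs1 hs2)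
  have conv : ∀ s t : Set ℝ, IntegrableOn F (s ×ˢ t) →
      (∫ a in s, ∫ b in t, f a b) = ∫ p in s ×ˢ t, F p := by
    intro s t h
    rw [Measure.volume_eq_prod, setIntegral_prod]
    rwa [← Measure.volume_eq_prod]
  rw [conv _ _ hIA, conv _ _ hIB, conv _ _ hID, conv _ _ hI]
  have hdisjAB : Disjoint (Set.Ioo 0 x ×ˢ Set.Ioo 0 x) (Set.Ioo x l ×ˢ Set.Ioo x l) := by
    refine Set.disjoint_prod.mpr (Or.inl ?_)
    rw [Set.disjoint_left]; rintro a ⟨_, h1⟩ ⟨h2, _⟩; exact absurd h1 (not_lt.mpr h2.le)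
  have hdisjD : Disjoint (Set.Ioo 0 x ×ˢ Set.Ioo 0 x ∪ Set.Ioo x l ×ˢ Set.Ioo x l)
      (Set.Ioo 0 x ×ˢ Set.Ioo x l) := by
    refine Disjoint.union_left ?_ ?_
    · refine Set.disjoint_prod.mpr (Or.inr ?_)
      rw [Set.disjoint_left]; rintro a ⟨_, h1⟩ ⟨h2, _⟩; exact absurd h1 (not_lt.mpr h2.le)
    · refine Set.disjoint_prod.mpr (Or.inl ?_)
      rw [Set.disjoint_left]; rintro a ⟨h1, _⟩ ⟨_, h2⟩; exact absurd h1 (not_lt.mpr h2.le)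
  have hm : MeasurableSet (Set.Ioo x l ×ˢ Set.Ioo x l) :=
    measurableSet_Ioo.prod measurableSet_Ioo
  have hmD : MeasurableSet (Set.Ioo 0 x ×ˢ Set.Ioo x l) :=
    measurableSet_Ioo.prod measurableSet_Ioo
  rw [← setIntegral_union hdisjAB hm hIA hIB, ← setIntegral_union hdisjD hmD (hIA.union hIB) hID]
  apply setIntegral_mono_set hI
  · exact Filter.Eventually.of_forall fun p => hf p.1 p.2
  · exact HasSubset.Subset.eventuallyLE (by
      refine Set.union_subset (Set.union_subset ?_ ?_) ?_ <;>
        exact Set.prod_mono (by assumption) (by assumption))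

lemma aux_alg (l p C cl cp cq cinf : ℝ) (hl : 0 < l) (hp : 0 ≤ p) (hq : p ≤ l)
    (hC : C ≤ l * cl - p * cp - (l - p) * cq) :
    (1 / l) * C ≤ (cl - cinf) + (p / l) * |cp - cinf| + ((l - p) / l) * |cq - cinf| := by
  have h1 : -|cp - cinf| ≤ cp - cinf := neg_abs_le _
  have h2 : -|cq - cinf| ≤ cq - cinf := neg_abs_le _
  have key : 0 ≤ ((cl - cinf) * l + p * |cp - cinf| + (l - p) * |cq - cinf| - C) / l := by
    apply div_nonneg _ hl.le
    nlinarith [mul_nonneg hp (by linarith : (0:ℝ) ≤ cp - cinf + |cp - cinf|),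
      mul_nonneg (by linarith : (0:ℝ) ≤ l - p) (by linarith : (0:ℝ) ≤ cq - cinf + |cq - cinf|)]
  have heq : (cl - cinf) + (p / l) * |cp - cinf| + ((l - p) / l) * |cq - cinf| - (1 / l) * C
      = ((cl - cinf) * l + p * |cp - cinf| + (l - p) * |cq - cinf| - C) / l := by
    field_simp
  linarith [heq ▸ key]



/-- If `c_l → c_∞`, `u_l` is a minimizer realizing `c_l`, the energy of the
minimizer on any subinterval `(a,b) ⊆ (0,l)` is at least `(b-a)·c_{b-a}`, and `R(s) = c_s - c_∞`
is bounded, then for any points `x_l ∈ [0,l]` the rescaled cross term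
`(1/l)∫₀^{x_l}∫_{x_l}^l |u_l(x)-u_l(y)|²/|x-y|² → 0` as `l → ∞`. -/
theorem stmt5 (c : ℝ → ℝ) (cinf K : ℝ) (u : ℝ → ℝ → ℝ) (x : ℝ → ℝ)
    (hc : Tendsto c atTop (𝓝 cinf))
    (hK : ∀ s : ℝ, 0 < s → |c s - cinf| ≤ K)
    (hx : ∀ l : ℝ, 0 < l → x l ∈ Set.Icc 0 l)
    (hint : ∀ l : ℝ, 0 < l →
      IntegrableOn (fun p : ℝ × ℝ => (u l p.1 - u l p.2) ^ 2 / (p.1 - p.2) ^ 2)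
        (Set.Ioo 0 l ×ˢ Set.Ioo 0 l))
    (hmin : ∀ l : ℝ, 0 < l →
      (1 / l) * (∫ a in Set.Ioo (0:ℝ) l, ∫ b in Set.Ioo (0:ℝ) l,
        (u l a - u l b) ^ 2 / (a - b) ^ 2) = c l)
    (hsub : ∀ l : ℝ, 0 < l → ∀ a b : ℝ, 0 ≤ a → a < b → b ≤ l →
      (b - a) * c (b - a) ≤
        ∫ s in Set.Ioo a b, ∫ t in Set.Ioo a b,
          (u l s - u l t) ^ 2 / (s - t) ^ 2) :
    Tendsto (fun l : ℝ =>
      (1 / l) * ∫ a in Set.Ioo 0 (x l), ∫ b in Set.Ioo (x l) l,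
        (u l a - u l b) ^ 2 / (a - b) ^ 2) atTop (𝓝 0) := by
  set g : ℝ → ℝ := fun l =>
    (1 / l) * ∫ a in Set.Ioo 0 (x l), ∫ b in Set.Ioo (x l) l,
      (u l a - u l b) ^ 2 / (a - b) ^ 2 with hg
  set Bd : ℝ → ℝ := fun l =>
    (c l - cinf) + (x l / l) * |c (x l) - cinf| + ((l - x l) / l) * |c (l - x l) - cinf|
    with hBd
  have hfpos : ∀ l a b : ℝ, 0 ≤ (u l a - u l b) ^ 2 / (a - b) ^ 2 :=
    fun l a b => div_nonneg (sq_nonneg _) (sq_nonneg _)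
  -- lower bound
  have hlow : ∀ᶠ l in atTop, (0:ℝ) ≤ g l := by
    filter_upwards [eventually_ge_atTop (1:ℝ)] with l hl1
    have hl0 : (0:ℝ) < l := lt_of_lt_of_le one_pos hl1
    apply mul_nonneg (by positivity)
    apply setIntegral_nonneg measurableSet_Ioo
    intro a _
    exact setIntegral_nonneg measurableSet_Ioo fun b _ => hfpos l a b
  -- upper bound
  have hup : ∀ᶠ l in atTop, g l ≤ Bd l := by
    filter_upwards [eventually_ge_atTop (1:ℝ)] with l hl1
    have hl0 : (0:ℝ) < l := lt_of_lt_of_le one_pos hl1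
    obtain ⟨hx0, hxl⟩ := hx l hl0
    rcases eq_or_lt_of_le hx0 with h0 | hx0'
    · -- x l = 0
      have hg0 : g l = 0 := by
        simp only [hg, ← h0, Set.Ioo_self, Measure.restrict_empty, integral_zero_measure,
          mul_zero]
      rw [hg0, hBd]
      simp only [← h0, zero_div, zero_mul, sub_zero, add_zero, zero_add]
      rw [div_self hl0.ne', one_mul]
      linarith [neg_abs_le (c l - cinf)]
    rcases eq_or_lt_of_le hxl with hl' | hxl'
    · -- x l = l
      have hg0 : g l = 0 := by
        simp only [hg, hl', Set.Ioo_self, Measure.restrict_empty, integral_zero_measure,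
          mul_zero, integral_zero]
      rw [hg0]
      show (0:ℝ) ≤ c l - cinf + x l / l * |c (x l) - cinf| + (l - x l) / l * |c (l - x l) - cinf|
      rw [hl', div_self hl0.ne', one_mul, sub_self, zero_div, zero_mul, add_zero]
      linarith [neg_abs_le (c l - cinf)]
    · -- 0 < x l < l
      have key := aux_split (fun a b => (u l a - u l b) ^ 2 / (a - b) ^ 2)
        (hfpos l) l (x l) hx0' hxl' (hint l hl0)
      have h1 := hsub l hl0 0 (x l) le_rfl hx0' hxl
      have h2 := hsub l hl0 (x l) l hx0 hxl' le_rfl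
      rw [sub_zero] at h1
      have hE := hmin l hl0
      have hEeq : (∫ a in Set.Ioo (0:ℝ) l, ∫ b in Set.Ioo (0:ℝ) l,
          (u l a - u l b) ^ 2 / (a - b) ^ 2) = l * c l := by
        field_simp at hE; linarith
      have hC : (∫ a in Set.Ioo 0 (x l), ∫ b in Set.Ioo (x l) l,
          (u l a - u l b) ^ 2 / (a - b) ^ 2)
          ≤ l * c l - x l * c (x l) - (l - x l) * c (l - x l) := by
        linarith
      exact aux_alg l (x l) _ (c l) (c (x l)) (c (l - x l)) cinf hl0 hx0 hxl hC
  -- Bd tends to 0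
  have hBd0 : Tendsto Bd atTop (𝓝 0) := by
    have t1 : Tendsto (fun l => c l - cinf) atTop (𝓝 0) := by
      simpa using hc.sub (tendsto_const_nhds (x := cinf))
    have t2 : Tendsto (fun l => (x l / l) * |c (x l) - cinf|) atTop (𝓝 0) := by
      apply aux_coef c cinf K hc hK
      filter_upwards [eventually_gt_atTop (0:ℝ)] with l hl
      exact ⟨(hx l hl).1, (hx l hl).2⟩
    have t3 : Tendsto (fun l => ((l - x l) / l) * |c (l - x l) - cinf|) atTop (𝓝 0) := by
      apply aux_coef c cinf K hc hK
      filter_upwards [eventually_gt_atTop (0:ℝ)] with l hl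
      exact ⟨by linarith [(hx l hl).2], by linarith [(hx l hl).1]⟩
    simpa using (t1.add t2).add t3
  exact tendsto_of_tendsto_of_tendsto_of_le_of_le' tendsto_const_nhds hBd0 hlow hup
end

section
/- Let v : ℝ → ℝ be 1-periodic and Lipschitz, let d(t) := min{|t|, 1-|t|} be the distance on the circle (for t ∈ [-1,1]), and set h(t) := v(t) - λt. Then ∫₀^1 ∫₀^1 |v(x)-v(y)|²/d(x-y)² dx dy = ∫₀^1 ∫_{-1/2}^{1/2} |h(y+z)-h(y)|²/|z|² dz dy - λ². -/
open MeasureTheory Set Filter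

private lemma circ_eq (z : ℝ) (h1 : -1 < z) (h2 : z < 1) :
    min |z| (1 - |z|) = |z - (round z : ℤ)| := by
  rcases le_or_gt (1/2 : ℝ) z with hz | hz
  · have hr : round z = 1 := by
      rw [round_eq, Int.floor_eq_iff]
      constructor <;> push_cast <;> linarith
    rw [hr]
    push_cast
    rw [abs_of_nonneg (by linarith : (0:ℝ) ≤ z), abs_of_nonpos (by linarith : z - 1 ≤ 0),
        min_eq_right (by linarith)]
    ring
  rcases le_or_gt (-(1/2) : ℝ) z with hz' | hz'
  · have hr : round z = 0 := by
      rw [round_eq, Int.floor_eq_iff]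
      constructor <;> push_cast <;> linarith
    rw [hr]
    push_cast
    rw [sub_zero, min_eq_left]
    rcases abs_cases z with ⟨h, _⟩ | ⟨h, _⟩ <;> linarith
  · have hr : round z = -1 := by
      rw [round_eq, Int.floor_eq_iff]
      constructor <;> push_cast <;> linarith
    rw [hr]
    push_cast
    rw [abs_of_nonpos (by linarith : z ≤ 0), abs_of_nonneg (by linarith : (0:ℝ) ≤ z - (-1)),
        min_eq_right (by linarith)]
    ring

private lemma bound2 {K : NNReal} {v : ℝ → ℝ} (hlip : LipschitzWith K v) (y z : ℝ) :
    |(v (y + z) - v y) / z| ≤ K := by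
  rcases eq_or_ne z 0 with rfl | hz
  · simp
  · rw [abs_div, div_le_iff₀ (abs_pos.mpr hz)]
    have := hlip.dist_le_mul (y + z) y
    simp only [Real.dist_eq] at this
    simpa using this

private lemma bound1 {K : NNReal} {v : ℝ → ℝ} (hlip : LipschitzWith K v) (y z : ℝ) :
    |(v (y + z) - v y) ^ 2 / z ^ 2| ≤ (K : ℝ) ^ 2 := by
  rw [← div_pow, abs_pow]
  exact pow_le_pow_left₀ (abs_nonneg _) (bound2 hlip y z) 2

/-- For `v : ℝ → ℝ` 1-periodic and Lipschitz, with `d(t) = min(|t|, 1-|t|)`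
the circle distance and `h(t) = v(t) - λt`, one has
`∫₀^1∫₀^1 |v(x)-v(y)|²/d(x-y)² = ∫₀^1∫_{-1/2}^{1/2} |h(y+z)-h(y)|²/|z|² dz dy - λ²`. -/
theorem stmt10 (v : ℝ → ℝ) (lam : ℝ) (K : NNReal)
    (hlip : LipschitzWith K v) (hper : ∀ t : ℝ, v (t + 1) = v t) :
    (∫ x in Set.Ioo (0:ℝ) 1, ∫ y in Set.Ioo (0:ℝ) 1,
      (v x - v y) ^ 2 / (min |x - y| (1 - |x - y|)) ^ 2)
    = (∫ y in Set.Ioo (0:ℝ) 1, ∫ z in Set.Ioo (-(1/2) : ℝ) (1/2),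
        ((v (y + z) - lam * (y + z)) - (v y - lam * y)) ^ 2 / z ^ 2) - lam ^ 2 := by
  have hcont : Continuous v := hlip.continuous
  set S : Set ℝ := Set.Ioo (-(1/2):ℝ) (1/2) with hS
  set Φ : ℝ → ℝ → ℝ := fun y z => (v (y + z) - v y) ^ 2 / z ^ 2 with hΦ
  set Ψ : ℝ → ℝ → ℝ := fun y z => (v (y + z) - v y) / z with hΨ
  have hvm : Measurable v := hcont.measurable
  have mΦ : Measurable (Function.uncurry Φ) := by
    apply Measurable.div <;> fun_prop
  have mΨ : Measurable (Function.uncurry Ψ) := by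
    apply Measurable.div <;> fun_prop
  haveI i1 : IsFiniteMeasure (volume.restrict (Set.Ioo (0:ℝ) 1)) :=
    ⟨by rw [Measure.restrict_apply_univ]; exact measure_Ioo_lt_top⟩
  haveI i2 : IsFiniteMeasure (volume.restrict S) :=
    ⟨by rw [Measure.restrict_apply_univ]; exact measure_Ioo_lt_top⟩
  have hprodΦ : Integrable (Function.uncurry Φ)
      ((volume.restrict (Set.Ioo (0:ℝ) 1)).prod (volume.restrict S)) := by
    apply Integrable.mono' (g := fun _ => (K:ℝ)^2) (integrable_const _) mΦ.aestronglyMeasurable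
    filter_upwards with p
    rw [Real.norm_eq_abs]; exact bound1 hlip p.1 p.2
  have hprodΨ : Integrable (Function.uncurry Ψ)
      ((volume.restrict (Set.Ioo (0:ℝ) 1)).prod (volume.restrict S)) := by
    apply Integrable.mono' (g := fun _ => (K:ℝ)) (integrable_const _) mΨ.aestronglyMeasurable
    filter_upwards with p
    rw [Real.norm_eq_abs]; exact bound2 hlip p.1 p.2
  have intΦ : ∀ y, IntegrableOn (Φ y) S := fun y =>
    Integrable.mono' (integrableOn_const (C := (K:ℝ)^2) measure_Ioo_lt_top.ne)
      (mΦ.comp measurable_prodMk_left).aestronglyMeasurable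
      (by filter_upwards with z; rw [Real.norm_eq_abs]; exact bound1 hlip y z)
  have intΨ : ∀ y, IntegrableOn (Ψ y) S := fun y =>
    Integrable.mono' (integrableOn_const (C := (K:ℝ)) measure_Ioo_lt_top.ne)
      (mΨ.comp measurable_prodMk_left).aestronglyMeasurable
      (by filter_upwards with z; rw [Real.norm_eq_abs]; exact bound2 hlip y z)
  have hvolS : (volume S).toReal = 1 := by
    rw [hS, Real.volume_Ioo]
    norm_num
  -- STEP 1 : change of variables in the LHS
  have step1 : (∫ x in Set.Ioo (0:ℝ) 1, ∫ y in Set.Ioo (0:ℝ) 1,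
      (v x - v y) ^ 2 / (min |x - y| (1 - |x - y|)) ^ 2)
      = ∫ y in Set.Ioo (0:ℝ) 1, ∫ z in S, Φ y z := by
    apply setIntegral_congr_fun measurableSet_Ioo
    intro x hx
    obtain ⟨hx0, hx1⟩ := hx
    set G : ℝ → ℝ := fun z => (v (x + z) - v x) ^ 2 / (z - (round z : ℤ)) ^ 2 with hG
    have hGper : Function.Periodic G 1 := by
      intro z
      simp only [hG]
      rw [show x + (z + 1) = (x + z) + 1 by ring, hper, round_add_one]
      push_cast
      ring_nf
    have e1 : (∫ y in Set.Ioo (0:ℝ) 1, (v x - v y) ^ 2 / (min |x - y| (1 - |x - y|)) ^ 2)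
        = ∫ z in (-x)..(1 - x), G z := by
      rw [← integral_Ioc_eq_integral_Ioo, ← intervalIntegral.integral_of_le zero_le_one]
      have e : ∫ z in (-x)..(1 - x), G z
          = ∫ z in (-x)..(1-x),
              (fun y => (v x - v y) ^ 2 / (min |x - y| (1 - |x - y|)) ^ 2) (x + z) := by
        apply intervalIntegral.integral_congr
        intro z hz
        rw [uIcc_of_le (by linarith)] at hz
        obtain ⟨hz1, hz2⟩ := hz
        have hz1' : -1 < z := by linarith
        have hz2' : z < 1 := by linarith
        simp only [hG]
        have hh : x - (x + z) = -z := by ring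
        rw [hh, abs_neg, circ_eq z hz1' hz2', ← sq_abs (z - _)]
        congr 1
        ring
      rw [e]
      have h2 := intervalIntegral.integral_comp_add_left
        (a := -x) (b := 1 - x) (fun y => (v x - v y) ^ 2 / (min |x - y| (1 - |x - y|)) ^ 2) x
      rw [h2]
      norm_num
    have e2 : ∫ z in (-x)..(1 - x), G z = ∫ z in (-(1/2):ℝ)..(1/2), G z := by
      have := hGper.intervalIntegral_add_eq (-x) (-(1/2))
      norm_num at this
      convert this using 2 <;> ring
    have e3 : ∫ z in (-(1/2):ℝ)..(1/2), G z = ∫ z in S, Φ x z := by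
      rw [intervalIntegral.integral_of_le (by norm_num), integral_Ioc_eq_integral_Ioo]
      apply setIntegral_congr_fun measurableSet_Ioo
      intro z hz
      obtain ⟨hz1, hz2⟩ := hz
      have hr : round z = 0 := by
        rw [round_eq, Int.floor_eq_iff]
        constructor <;> push_cast <;> linarith
      simp only [hG, hΦ, hr, Int.cast_zero, sub_zero]
    dsimp only
    rw [e1, e2, e3]
  -- a.e. nonzero
  have hz0 : ∀ᵐ z : ℝ, z ≠ 0 := by
    rw [ae_iff]
    convert Real.volume_singleton (a := (0:ℝ)) using 2
    ext z
    simp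
  -- STEP 2 : expand the RHS integrand
  have inner_eq : ∀ y : ℝ,
      (∫ z in S, ((v (y + z) - lam * (y + z)) - (v y - lam * y)) ^ 2 / z ^ 2)
      = (∫ z in S, Φ y z) - 2 * lam * (∫ z in S, Ψ y z) + lam ^ 2 := by
    intro y
    have e : (∫ z in S, ((v (y + z) - lam * (y + z)) - (v y - lam * y)) ^ 2 / z ^ 2)
        = ∫ z in S, (Φ y z - 2 * lam * Ψ y z + lam ^ 2) := by
      apply integral_congr_ae
      filter_upwards [ae_restrict_of_ae hz0] with z hz
      simp only [hΦ, hΨ]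
      field_simp
      ring
    have hf1 : Integrable (fun z => Φ y z - 2 * lam * Ψ y z) (volume.restrict S) :=
      (intΦ y).sub ((intΨ y).const_mul _)
    have hf2 : Integrable (fun z => 2 * lam * Ψ y z) (volume.restrict S) :=
      (intΨ y).const_mul _
    have hf3 : Integrable (fun _ : ℝ => lam ^ 2) (volume.restrict S) :=
      integrableOn_const measure_Ioo_lt_top.ne
    rw [e, integral_add hf1 hf3, integral_sub (intΦ y) hf2, integral_const_mul,
      setIntegral_const, smul_eq_mul, measureReal_def, hvolS, one_mul]
  -- integrability of the partial integrals
  have hJ : IntegrableOn (fun y => ∫ z in S, Φ y z) (Set.Ioo (0:ℝ) 1) :=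
    hprodΦ.integral_prod_left
  have hB : IntegrableOn (fun y => ∫ z in S, Ψ y z) (Set.Ioo (0:ℝ) 1) :=
    hprodΨ.integral_prod_left
  -- the cross term vanishes
  have hBzero : (∫ y in Set.Ioo (0:ℝ) 1, ∫ z in S, Ψ y z) = 0 := by
    rw [integral_integral_swap hprodΨ]
    have : ∀ z : ℝ, (∫ y in Set.Ioo (0:ℝ) 1, Ψ y z) = 0 := by
      intro z
      have hdiv : (∫ y in Set.Ioo (0:ℝ) 1, Ψ y z)
          = (∫ y in Set.Ioo (0:ℝ) 1, (v (y + z) - v y)) / z := by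
        simp only [hΨ]
        rw [integral_div]
      rw [hdiv]
      have hIoo : (∫ y in Set.Ioo (0:ℝ) 1, (v (y + z) - v y))
          = ∫ y in (0:ℝ)..1, (v (y + z) - v y) := by
        rw [intervalIntegral.integral_of_le zero_le_one, integral_Ioc_eq_integral_Ioo]
      have c1 : Continuous fun y : ℝ => v (y + z) := by fun_prop
      rw [hIoo, intervalIntegral.integral_sub (c1.intervalIntegrable 0 1)
          (hcont.intervalIntegrable 0 1)]
      have hshift : (∫ y in (0:ℝ)..1, v (y + z)) = ∫ y in (0:ℝ)..1, v y := by
        rw [intervalIntegral.integral_comp_add_right v z, zero_add, add_comm 1 z]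
        have hv : Function.Periodic v 1 := hper
        have := hv.intervalIntegral_add_eq z 0
        simpa using this
      rw [hshift, sub_self, zero_div]
    rw [setIntegral_congr_fun measurableSet_Ioo (fun z _ => this z)]
    simp
  -- STEP 3 : combine
  have step2 : (∫ y in Set.Ioo (0:ℝ) 1, ∫ z in S,
        ((v (y + z) - lam * (y + z)) - (v y - lam * y)) ^ 2 / z ^ 2)
      = (∫ y in Set.Ioo (0:ℝ) 1, ∫ z in S, Φ y z) + lam ^ 2 := by
    rw [setIntegral_congr_fun measurableSet_Ioo (fun y _ => inner_eq y)]
    have hg1 : Integrable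
        (fun y => (∫ z in S, Φ y z) - 2 * lam * (∫ z in S, Ψ y z))
        (volume.restrict (Set.Ioo (0:ℝ) 1)) := hJ.sub (hB.const_mul _)
    have hg2 : Integrable (fun y => 2 * lam * (∫ z in S, Ψ y z))
        (volume.restrict (Set.Ioo (0:ℝ) 1)) := hB.const_mul _
    have hg3 : Integrable (fun _ : ℝ => lam ^ 2) (volume.restrict (Set.Ioo (0:ℝ) 1)) :=
      integrableOn_const measure_Ioo_lt_top.ne
    rw [integral_add hg1 hg3, integral_sub hJ hg2, integral_const_mul, hBzero,
      setIntegral_const, smul_eq_mul, measureReal_def, Real.volume_Ioo]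
    norm_num
  rw [step1, step2]
  ring
end

section
/- Let N ≥ 2, 0 < ρ < 1/N, λ > 0, and let x₁,…,x_N be distinct points on the circle ℝ/ℤ with pairwise circle distances ≥ ρ. Define the energy Ẽ(x₁,…,x_N) := 2 Σ_{i≠j} [max(-log|x_j-x_i|, -log(1-|x_j-x_i|)) + 2·min(|x_j-x_i|, 1-|x_j-x_i|)], where |x_j - x_i| denotes the representative in [0,1). Then Ẽ attains its minimum over all such admissible configurations, and every minimizer consists of N evenly-spaced points, i.e., consecutive circle distances all equal to 1/N. -/
open Finset

set_option linter.unusedSectionVars false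
set_option linter.unusedVariables false
set_option maxHeartbeats 1000000

/-- Circle distance on `ℝ/ℤ` via representatives. -/
noncomputable def circleDist (a b : ℝ) : ℝ := min |a - b| (1 - |a - b|)

/-- The interaction kernel `f(y) = max(-log y, -log(1-y)) + 2 min(y, 1-y)`. -/
noncomputable def interKernel (y : ℝ) : ℝ :=
  max (-Real.log y) (-Real.log (1 - y)) + 2 * min y (1 - y)

/-- The energy `Ẽ(x₁,…,x_N) = 2 Σ_{i≠j} f(|x_j - x_i|)`, where `|x_j - x_i|` is the
representative in `[0,1)` of the difference of points in `[0,1)`. -/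
noncomputable def tildeE {N : ℕ} (x : Fin N → ℝ) : ℝ :=
  2 * ∑ i, ∑ j, if i ≠ j then interKernel |x j - x i| else 0

/-- Admissible configurations: `N` points in `[0,1)` with pairwise circle distance `≥ ρ`. -/
def AdmissibleConf {N : ℕ} (ρ : ℝ) (x : Fin N → ℝ) : Prop :=
  (∀ i, x i ∈ Set.Ico (0:ℝ) 1) ∧ ∀ i j, i ≠ j → ρ ≤ circleDist (x i) (x j)

noncomputable def hOne (y : ℝ) : ℝ := -Real.log y + 2*y

lemma hOne_strictConvex : StrictConvexOn ℝ (Set.Ioo (0:ℝ) 1) hOne := by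
  have h1 : StrictConvexOn ℝ (Set.Ioi (0:ℝ)) (fun y => -Real.log y) :=
    strictConcaveOn_log_Ioi.neg
  have h2 : StrictConvexOn ℝ (Set.Ioo (0:ℝ) 1) (fun y => -Real.log y) :=
    h1.subset Set.Ioo_subset_Ioi_self (convex_Ioo _ _)
  have h3 : ConvexOn ℝ (Set.Ioo (0:ℝ) 1) (fun y : ℝ => 2*y) :=
    (convexOn_id (convex_Ioo _ _)).smul (by norm_num)
  have H := h2.add_convexOn h3
  have hf : ((fun y => -Real.log y) + fun y : ℝ => 2 * y) = hOne := by funext y; simp [hOne]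
  rw [hf] at H; exact H

lemma hTwo_strictConvex : StrictConvexOn ℝ (Set.Ioo (0:ℝ) 1) (fun y => hOne (1 - y)) := by
  refine ⟨convex_Ioo _ _, fun x hx y hy hxy a b ha hb hab => ?_⟩
  have hx' : 1 - x ∈ Set.Ioo (0:ℝ) 1 := by constructor <;> [linarith [hx.2]; linarith [hx.1]]
  have hy' : 1 - y ∈ Set.Ioo (0:ℝ) 1 := by constructor <;> [linarith [hy.2]; linarith [hy.1]]
  have := hOne_strictConvex.2 hx' hy' (by intro h; apply hxy; linarith) ha hb hab
  have e : a • (1 - x) + b • (1 - y) = 1 - (a • x + b • y) := by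
    simp only [smul_eq_mul]; nlinarith [hab]
  rw [e] at this
  simpa using this

lemma key_ineq {y : ℝ} (hy : y ∈ Set.Ioc (0:ℝ) (1/2)) : hOne (1 - y) ≤ hOne y := by
  set g : ℝ → ℝ := fun t => -Real.log t + Real.log (1 - t) + 4*t - 2 with hg
  have hderiv : ∀ t ∈ Set.Ioo (0:ℝ) (1/2), HasDerivAt g (-t⁻¹ + (1-t)⁻¹ * (-1) + 4) t := by
    intro t ht
    have h0 : t ≠ 0 := ne_of_gt ht.1
    have h1 : (1:ℝ) - t ≠ 0 := by nlinarith [ht.2]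
    have d1 : HasDerivAt (fun t : ℝ => -Real.log t) (-t⁻¹) t := (Real.hasDerivAt_log h0).neg
    have d2 : HasDerivAt (fun t : ℝ => Real.log (1 - t)) ((1-t)⁻¹ * (-1)) t := by
      have inner : HasDerivAt (fun t : ℝ => 1 - t) (-1) t := by
        simpa using (hasDerivAt_id t).const_sub 1
      exact (Real.hasDerivAt_log h1).comp t inner
    have d3 : HasDerivAt (fun t : ℝ => 4*t) 4 t := by
      simpa using (hasDerivAt_id t).const_mul 4
    simpa [hg] using ((d1.add d2).add d3).sub_const 2
  have hcont : ContinuousOn g (Set.Ioc (0:ℝ) (1/2)) := by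
    intro t ht
    have h0 : t ≠ 0 := ne_of_gt ht.1
    have h1 : (1:ℝ) - t ≠ 0 := by nlinarith [ht.2]
    exact (((Real.continuousAt_log h0).neg.add
      ((Real.continuousAt_log h1).comp (by fun_prop))).add (by fun_prop)).sub
      (continuousAt_const) |>.continuousWithinAt
  have hint : interior (Set.Ioc (0:ℝ) (1/2)) = Set.Ioo (0:ℝ) (1/2) := interior_Ioc
  have hanti : AntitoneOn g (Set.Ioc (0:ℝ) (1/2)) := by
    apply antitoneOn_of_deriv_nonpos (convex_Ioc _ _) hcont
    · rw [hint]; intro t ht; exact (hderiv t ht).differentiableAt.differentiableWithinAt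
    · rw [hint]; intro t ht
      rw [(hderiv t ht).deriv]
      have h0 : (0:ℝ) < t := ht.1
      have h1 : (0:ℝ) < 1 - t := by nlinarith [ht.2]
      have e0 : t⁻¹ * t = 1 := inv_mul_cancel₀ (ne_of_gt h0)
      have e1 : (1-t)⁻¹ * (1-t) = 1 := inv_mul_cancel₀ (ne_of_gt h1)
      nlinarith [sq_nonneg (2*t - 1), mul_pos (inv_pos.2 h0) (inv_pos.2 h1),
        mul_pos h0 h1, inv_pos.2 h0, inv_pos.2 h1]
  have h2 : g (1/2) = 0 := by norm_num [hg]
  have := hanti hy (by constructor <;> norm_num) hy.2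
  rw [h2] at this
  have hlog : Real.log (1 - y) - Real.log y + 4*y - 2 ≥ 0 := by
    simp only [hg] at this; linarith
  simp only [hOne]; linarith

lemma interKernel_symm (y : ℝ) : interKernel (1 - y) = interKernel y := by
  unfold interKernel
  rw [sub_sub_cancel, max_comm, min_comm]

lemma interKernel_eq_max {y : ℝ} (hy : y ∈ Set.Ioo (0:ℝ) 1) :
    interKernel y = max (hOne y) (hOne (1 - y)) := by
  rcases le_or_gt y (1/2) with h | h
  · have h1 : y ≤ 1 - y := by linarith
    have hmin : min y (1 - y) = y := min_eq_left h1
    have hmax : max (-Real.log y) (-Real.log (1 - y)) = -Real.log y := by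
      apply max_eq_left
      exact neg_le_neg (Real.log_le_log hy.1 h1)
    have hk : max (hOne y) (hOne (1 - y)) = hOne y :=
      max_eq_left (key_ineq ⟨hy.1, h⟩)
    rw [interKernel, hmin, hmax, hk, hOne]
  · have h1 : 1 - y ≤ y := by linarith
    have hmin : min y (1 - y) = 1 - y := min_eq_right h1
    have hmax : max (-Real.log y) (-Real.log (1 - y)) = -Real.log (1 - y) := by
      apply max_eq_right
      exact neg_le_neg (Real.log_le_log (by linarith [hy.2]) h1)
    have hk : max (hOne y) (hOne (1 - y)) = hOne (1 - y) := by
      apply max_eq_right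
      have := key_ineq (y := 1 - y) ⟨by linarith [hy.2], by linarith⟩
      rwa [sub_sub_cancel] at this
    rw [interKernel, hmin, hmax, hk, hOne]

lemma interKernel_strictConvex : StrictConvexOn ℝ (Set.Ioo (0:ℝ) 1) interKernel := by
  have H := hOne_strictConvex.sup hTwo_strictConvex
  refine ⟨convex_Ioo _ _, fun x hx y hy hxy a b ha hb hab => ?_⟩
  have hmem : a • x + b • y ∈ Set.Ioo (0:ℝ) 1 := (convex_Ioo _ _) hx hy ha.le hb.le hab
  rw [interKernel_eq_max hx, interKernel_eq_max hy, interKernel_eq_max hmem]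
  have := H.2 hx hy hxy ha hb hab
  simpa [Pi.sup_apply] using this

lemma jensen_lb {M : ℕ} (hM : 0 < M) (d : Fin M → ℝ) (hd : ∀ i, d i ∈ Set.Ioo (0:ℝ) 1) :
    (M:ℝ) * interKernel ((∑ i, d i)/M) ≤ ∑ i, interKernel (d i) := by
  have hM' : (M:ℝ) ≠ 0 := Nat.cast_ne_zero.2 hM.ne'
  have h1 : ∑ _i : Fin M, (M:ℝ)⁻¹ = 1 := by
    simp [Finset.sum_const, Finset.card_univ]
    field_simp
  have := interKernel_strictConvex.convexOn.map_sum_le (t := Finset.univ)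
    (w := fun _ => (M:ℝ)⁻¹) (p := d) (fun i _ => by positivity) h1 (fun i _ => hd i)
  have e1 : ∑ i, (M:ℝ)⁻¹ • d i = (∑ i, d i)/M := by
    rw [← Finset.smul_sum]; simp [smul_eq_mul, div_eq_inv_mul]
  have e2 : ∑ i, (M:ℝ)⁻¹ • interKernel (d i) = (∑ i, interKernel (d i))/M := by
    rw [← Finset.smul_sum]; simp [smul_eq_mul, div_eq_inv_mul]
  rw [e1, e2] at this
  calc (M:ℝ) * interKernel ((∑ i, d i)/M) ≤ (M:ℝ) * ((∑ i, interKernel (d i))/M) := by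
        exact mul_le_mul_of_nonneg_left this (by positivity)
    _ = ∑ i, interKernel (d i) := by field_simp

lemma jensen_eq {M : ℕ} (hM : 0 < M) (d : Fin M → ℝ) (hd : ∀ i, d i ∈ Set.Ioo (0:ℝ) 1)
    (h : ∑ i, interKernel (d i) ≤ (M:ℝ) * interKernel ((∑ i, d i)/M)) :
    ∀ i, d i = (∑ j, d j)/M := by
  have hMpos : (0:ℝ) < (M:ℝ) := by positivity
  have h1 : ∑ _i : Fin M, (M:ℝ)⁻¹ = 1 := by
    simp [Finset.sum_const, Finset.card_univ]; field_simp
  have e1 : ∑ i, (M:ℝ)⁻¹ • d i = (∑ i, d i)/M := by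
    rw [← Finset.smul_sum]; simp [smul_eq_mul, div_eq_inv_mul]
  have e2 : ∑ i, (M:ℝ)⁻¹ • interKernel (d i) = (∑ i, interKernel (d i))/M := by
    rw [← Finset.smul_sum]; simp [smul_eq_mul, div_eq_inv_mul]
  have key : ∀ j ∈ Finset.univ, ∀ k ∈ Finset.univ, d j = d k := by
    apply interKernel_strictConvex.eq_of_le_map_sum (t := Finset.univ)
      (w := fun _ => (M:ℝ)⁻¹) (p := d) (fun i _ => by positivity) h1 (fun i _ => hd i)
    rw [e1, e2]
    rw [div_le_iff₀ hMpos, mul_comm]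
    exact h
  intro i
  have : ∑ j, d j = M * d i := by
    rw [Finset.sum_congr rfl (fun j _ => key j (Finset.mem_univ j) i (Finset.mem_univ i))]
    simp [Finset.sum_const, Finset.card_univ, mul_comm]
  rw [this]; field_simp

section Comb
variable {N : ℕ} [NeZero N]

/-- cyclic `k`-step gap -/
noncomputable def gap (y : Fin N → ℝ) (i k : Fin N) : ℝ :=
  y (i + k) - y i + (if (i:ℕ) + (k:ℕ) < N then 0 else 1)

lemma add_val_lt {i k : Fin N} (h : (i:ℕ) + (k:ℕ) < N) : ((i + k : Fin N) : ℕ) = i + k := by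
  rw [Fin.add_def]; exact Nat.mod_eq_of_lt h

lemma add_val_ge {i k : Fin N} (h : ¬ (i:ℕ) + (k:ℕ) < N) :
    ((i + k : Fin N) : ℕ) = i + k - N := by
  have hk : (k:ℕ) < N := k.isLt
  simp only [Fin.add_def]
  show ((i:ℕ) + (k:ℕ)) % N = (i:ℕ) + (k:ℕ) - N
  rw [Nat.mod_eq_sub_mod (by omega), Nat.mod_eq_of_lt (by omega)]

variable {y : Fin N → ℝ} (hy : StrictMono y) (hy01 : ∀ i, y i ∈ Set.Ico (0:ℝ) 1)

include hy hy01 in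
lemma gap_mem {i k : Fin N} (hk : k ≠ 0) : gap y i k ∈ Set.Ioo (0:ℝ) 1 := by
  have hkv : (k:ℕ) ≠ 0 := by
    intro h; exact hk (Fin.ext (by simpa using h))
  unfold gap
  by_cases h : (i:ℕ) + (k:ℕ) < N
  · have hlt : i < i + k := by
      rw [Fin.lt_def, add_val_lt h]; omega
    have := hy hlt
    have h1 := (hy01 i).1
    have h2 := (hy01 (i+k)).2
    rw [if_pos h]
    constructor <;> [linarith; linarith]
  · have hlt : i + k < i := by
      rw [Fin.lt_def, add_val_ge h]
      have := i.isLt; have := k.isLt; omega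
    have := hy hlt
    have h1 := (hy01 (i+k)).1
    have h2 := (hy01 i).2
    rw [if_neg h]
    constructor <;> [linarith; linarith]

include hy hy01 in
lemma gap_kernel {i k : Fin N} (hk : k ≠ 0) :
    interKernel |y (i + k) - y i| = interKernel (gap y i k) := by
  have hkv : (k:ℕ) ≠ 0 := by
    intro h; exact hk (Fin.ext (by simpa using h))
  unfold gap
  by_cases h : (i:ℕ) + (k:ℕ) < N
  · have hlt : i < i + k := by rw [Fin.lt_def, add_val_lt h]; omega
    have := hy hlt
    rw [if_pos h, abs_of_pos (by linarith)]
    ring_nf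
  · have hlt : i + k < i := by
      rw [Fin.lt_def, add_val_ge h]
      have := i.isLt; have := k.isLt; omega
    have := hy hlt
    rw [if_neg h, abs_of_neg (by linarith)]
    have : -(y (i+k) - y i) = 1 - (y (i+k) - y i + 1) := by ring
    rw [this, interKernel_symm]

lemma gap_sum {k : Fin N} (hk : k ≠ 0) : ∑ i, gap y i k = (k:ℕ) := by
  have hkv : (k:ℕ) ≠ 0 := by
    intro h; exact hk (Fin.ext (by simpa using h))
  unfold gap
  rw [Finset.sum_add_distrib, Finset.sum_sub_distrib]
  have e1 : ∑ i, y (i + k) = ∑ i, y i :=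
    Fintype.sum_equiv (Equiv.addRight k) _ _ (fun i => rfl)
  rw [e1, sub_self, zero_add]
  have e2 : ∑ i : Fin N, (if (i:ℕ) + (k:ℕ) < N then (0:ℝ) else 1)
      = ∑ m ∈ Finset.range N, (if m + (k:ℕ) < N then (0:ℝ) else 1) :=
    Fin.sum_univ_eq_sum_range (fun m => if m + (k:ℕ) < N then (0:ℝ) else 1) N
  rw [e2, Finset.sum_ite, Finset.sum_const, Finset.sum_const]
  have e3 : (Finset.range N).filter (fun m => ¬ (m + (k:ℕ) < N)) = Finset.Ico (N - (k:ℕ)) N := by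
    ext m
    simp only [Finset.mem_filter, Finset.mem_range, Finset.mem_Ico, not_lt]
    have := k.isLt; omega
  rw [e3, Nat.card_Ico]
  have := k.isLt
  have : N - (N - (k:ℕ)) = (k:ℕ) := by omega
  rw [this]
  simp


lemma tildeE_comp_perm (x : Fin N → ℝ) (σ : Equiv.Perm (Fin N)) :
    tildeE (x ∘ σ) = tildeE x := by
  unfold tildeE
  congr 1
  rw [← Fintype.sum_prod_type (f := fun p : Fin N × Fin N =>
    if p.1 ≠ p.2 then interKernel |(x ∘ σ) p.2 - (x ∘ σ) p.1| else 0),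
    ← Fintype.sum_prod_type (f := fun p : Fin N × Fin N =>
    if p.1 ≠ p.2 then interKernel |x p.2 - x p.1| else 0)]
  apply Fintype.sum_equiv (Equiv.prodCongr σ σ)
  intro p
  simp only [Equiv.prodCongr_apply, Function.comp_apply, Prod.map]
  congr 1
  simp [σ.injective.ne_iff]

lemma tildeE_decomp (y : Fin N → ℝ) (hy : StrictMono y) (hy01 : ∀ i, y i ∈ Set.Ico (0:ℝ) 1) :
    tildeE y = 2 * ∑ k ∈ Finset.univ.erase (0 : Fin N), ∑ i, interKernel (gap y i k) := by
  unfold tildeE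
  congr 1
  have inner : ∀ i : Fin N, (∑ j, if i ≠ j then interKernel |y j - y i| else 0)
      = ∑ k ∈ Finset.univ.erase (0 : Fin N), interKernel (gap y i k) := by
    intro i
    have step1 : ∑ j, (if i ≠ j then interKernel |y j - y i| else 0)
        = ∑ j ∈ Finset.univ.filter (fun j => i ≠ j), interKernel |y j - y i| :=
      (Finset.sum_filter _ _).symm
    have step2 : Finset.univ.filter (fun j => i ≠ j) = Finset.univ.erase i := by
      ext j; simp [ne_comm, eq_comm]
    rw [step1, step2]
    apply Finset.sum_nbij' (i := fun j => j - i) (j := fun k => i + k)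
    · intro j hj
      simp only [Finset.mem_erase, Finset.mem_univ, and_true] at hj ⊢
      intro h
      apply hj
      have := congrArg (· + i) h
      simpa [sub_add_cancel] using this
    · intro k hk
      simp only [Finset.mem_erase, Finset.mem_univ, and_true] at hk ⊢
      intro h
      apply hk
      have := congrArg (· - i) h
      simpa using this
    · intro j _; simp
    · intro k _; simp
    · intro j hj
      simp only [Finset.mem_erase, Finset.mem_univ, and_true] at hj
      have hk : (j - i : Fin N) ≠ 0 := by
        intro h; apply hj
        have := congrArg (· + i) h
        simpa [sub_add_cancel] using this
      rw [← gap_kernel hy hy01 hk]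
      congr 2
      simp
  rw [Finset.sum_congr rfl (fun i _ => inner i), Finset.sum_comm]


end Comb

theorem stmt14 (N : ℕ) (hN : 2 ≤ N) (ρ lam : ℝ) (hlam : 0 < lam)
    (hρ0 : 0 < ρ) (hρN : ρ < 1 / (N : ℝ)) :
    (∃ x : Fin N → ℝ, AdmissibleConf ρ x ∧
      ∀ y : Fin N → ℝ, AdmissibleConf ρ y → tildeE x ≤ tildeE y) ∧
    (∀ x : Fin N → ℝ, AdmissibleConf ρ x →
      (∀ y : Fin N → ℝ, AdmissibleConf ρ y → tildeE x ≤ tildeE y) →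
      ∃ θ : ℝ, ∃ σ : Equiv.Perm (Fin N),
        ∀ i : Fin N, x (σ i) = Int.fract (θ + (i : ℕ) / (N : ℝ))) := by
  haveI : NeZero N := ⟨by omega⟩
  have hN0 : 0 < N := by omega
  have hNR : (0:ℝ) < N := by positivity
  -- the evenly spaced configuration
  set xe : Fin N → ℝ := fun i => (i:ℕ)/(N:ℝ) with hxe
  have hxe_mono : StrictMono xe := by
    intro i j h
    have : ((i:ℕ):ℝ) < ((j:ℕ):ℝ) := by exact_mod_cast h
    exact div_lt_div_of_pos_right this hNR
  have hxe01 : ∀ i, xe i ∈ Set.Ico (0:ℝ) 1 := by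
    intro i
    constructor
    · positivity
    · rw [div_lt_one hNR]; exact_mod_cast i.isLt
  have hxe_adm : AdmissibleConf ρ xe := by
    refine ⟨hxe01, fun i j hij => ?_⟩
    have hvne : (i:ℕ) ≠ (j:ℕ) := fun h => hij (Fin.ext h)
    have h1 : (1:ℤ) ≤ |(i:ℕ) - ((j:ℕ):ℤ)| :=
      Int.one_le_abs (sub_ne_zero.2 (by exact_mod_cast hvne))
    have h2 : |((i:ℕ):ℤ) - ((j:ℕ):ℤ)| ≤ (N:ℤ) - 1 := by
      have hi := i.isLt; have hj := j.isLt
      rw [abs_le]; omega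
    have habs : |xe i - xe j| = (|((i:ℕ):ℤ) - ((j:ℕ):ℤ)| : ℝ)/(N:ℝ) := by
      rw [hxe]
      rw [div_sub_div_same, abs_div, abs_of_pos hNR]
      push_cast [Int.cast_abs]
      norm_cast
    have h1' : (1:ℝ) ≤ (|((i:ℕ):ℤ) - ((j:ℕ):ℤ)| : ℝ) := by exact_mod_cast h1
    have h2' : (|((i:ℕ):ℤ) - ((j:ℕ):ℤ)| : ℝ) ≤ (N:ℝ) - 1 := by
      have : ((|((i:ℕ):ℤ) - ((j:ℕ):ℤ)| : ℤ):ℝ) ≤ (((N:ℤ) - 1 : ℤ):ℝ) := by exact_mod_cast h2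
      push_cast at this ⊢; linarith
    unfold circleDist
    rw [habs]
    set t : ℝ := (|((i:ℕ):ℤ) - ((j:ℕ):ℤ)| : ℝ) with ht
    have ht1 : 1/(N:ℝ) ≤ t/N := by gcongr
    have ht2 : t/(N:ℝ) ≤ ((N:ℝ)-1)/N := by gcongr
    have he : ((N:ℝ)-1)/N = 1 - 1/N := by field_simp
    apply le_min (hρN.le.trans ht1)
    have : t/(N:ℝ) ≤ 1 - 1/N := by rw [← he]; exact ht2
    linarith [hρN.le]
  -- gaps of the evenly spaced configuration
  have gap_even : ∀ i k : Fin N, gap xe i k = (k:ℕ)/(N:ℝ) := by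
    intro i k
    unfold gap
    by_cases h : (i:ℕ) + (k:ℕ) < N
    · rw [if_pos h, hxe]
      simp only []
      rw [add_val_lt h]
      push_cast
      field_simp
      ring
    · rw [if_neg h, hxe]
      simp only []
      rw [add_val_ge h]
      have hle : N ≤ (i:ℕ) + (k:ℕ) := not_lt.1 h
      push_cast [Nat.cast_sub hle]
      field_simp
      ring
  -- value of the energy of the evenly spaced configuration
  have hEe : tildeE xe = 2 * ∑ k ∈ Finset.univ.erase (0 : Fin N),
      (N:ℝ) * interKernel ((k:ℕ)/(N:ℝ)) := by
    rw [tildeE_decomp xe hxe_mono hxe01]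
    congr 1
    apply Finset.sum_congr rfl
    intro k _
    rw [Finset.sum_congr rfl (fun i _ => by rw [gap_even i k])]
    simp [Finset.sum_const, Finset.card_univ, mul_comm]
  -- injectivity of admissible configurations
  have hinj : ∀ x : Fin N → ℝ, AdmissibleConf ρ x → Function.Injective x := by
    intro x hx a b hab
    by_contra hne
    have := hx.2 a b hne
    rw [circleDist, hab, sub_self, abs_zero] at this
    have : ρ ≤ 0 := le_trans this (min_le_left _ _)
    linarith
  -- key comparison for any admissible configuration
  have key : ∀ x : Fin N → ℝ, AdmissibleConf ρ x →
      tildeE xe ≤ tildeE x ∧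
      (tildeE x ≤ tildeE xe →
        ∀ i, gap (x ∘ Tuple.sort x) i (1 : Fin N) = 1/(N:ℝ)) := by
    intro x hx
    set σ := Tuple.sort x with hσ
    set y : Fin N → ℝ := x ∘ σ with hyd
    have hymono : StrictMono y :=
      (Tuple.monotone_sort x).strictMono_of_injective ((hinj x hx).comp σ.injective)
    have hy01 : ∀ i, y i ∈ Set.Ico (0:ℝ) 1 := fun i => hx.1 _
    have hEx : tildeE x = 2 * ∑ k ∈ Finset.univ.erase (0 : Fin N),
        ∑ i, interKernel (gap y i k) := by
      rw [← tildeE_comp_perm x σ, tildeE_decomp y hymono hy01]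
    have hterm : ∀ k ∈ Finset.univ.erase (0 : Fin N),
        (N:ℝ) * interKernel ((k:ℕ)/(N:ℝ)) ≤ ∑ i, interKernel (gap y i k) := by
      intro k hk
      have hk0 : k ≠ 0 := (Finset.mem_erase.1 hk).1
      have := jensen_lb hN0 (fun i => gap y i k) (fun i => gap_mem hymono hy01 hk0)
      rwa [gap_sum hk0] at this
    constructor
    · rw [hEx, hEe]
      have := Finset.sum_le_sum hterm
      linarith
    · intro hle
      rw [hEx, hEe] at hle
      have hsums : ∑ k ∈ Finset.univ.erase (0 : Fin N), (N:ℝ) * interKernel ((k:ℕ)/(N:ℝ))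
          = ∑ k ∈ Finset.univ.erase (0 : Fin N), ∑ i, interKernel (gap y i k) := by
        have h1 := Finset.sum_le_sum hterm
        have h2 : ∑ k ∈ Finset.univ.erase (0 : Fin N), ∑ i, interKernel (gap y i k)
            ≤ ∑ k ∈ Finset.univ.erase (0 : Fin N), (N:ℝ) * interKernel ((k:ℕ)/(N:ℝ)) := by
          linarith
        linarith
      have heach := (Finset.sum_eq_sum_iff_of_le hterm).1 hsums
      have h1mem : (1 : Fin N) ∈ Finset.univ.erase (0 : Fin N) := by
        rw [Finset.mem_erase]
        refine ⟨?_, Finset.mem_univ _⟩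
        intro h
        have := congrArg Fin.val h
        rw [Fin.val_one', Nat.mod_eq_of_lt (by omega), Fin.val_zero] at this
        omega
      have h1 := (heach 1 h1mem).symm
      have hv1 : ((1 : Fin N) : ℕ) = 1 := by
        rw [Fin.val_one', Nat.mod_eq_of_lt (by omega)]
      have hk0' : (1 : Fin N) ≠ 0 := by
        intro h
        have := congrArg Fin.val h
        rw [hv1, Fin.val_zero] at this; omega
      rw [hv1] at h1
      have heq := jensen_eq hN0 (fun i => gap y i (1 : Fin N))
        (fun i => gap_mem hymono hy01 hk0')
        (le_of_eq (by rw [gap_sum hk0', hv1]; push_cast; linarith [h1]))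
      intro i
      have h3 := heq i
      rw [gap_sum hk0', hv1] at h3
      rw [h3]
      norm_num
  constructor
  · exact ⟨xe, hxe_adm, fun z hz => (key z hz).1⟩
  · intro x hx hmin
    have hle : tildeE x ≤ tildeE xe := hmin xe hxe_adm
    have hgap1 := (key x hx).2 hle
    set σ := Tuple.sort x with hσ
    set y : Fin N → ℝ := x ∘ σ with hyd
    have hymono : StrictMono y :=
      (Tuple.monotone_sort x).strictMono_of_injective ((hinj x hx).comp σ.injective)
    have hy01 : ∀ i, y i ∈ Set.Ico (0:ℝ) 1 := fun i => hx.1 _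
    have hv1 : ((1 : Fin N) : ℕ) = 1 := by
      rw [Fin.val_one', Nat.mod_eq_of_lt (by omega)]
    -- all points are θ + m/N
    have hstep : ∀ m : ℕ, ∀ h : m < N, y ⟨m, h⟩ = y ⟨0, hN0⟩ + (m:ℝ)/(N:ℝ) := by
      intro m
      induction m with
      | zero => intro h; simp
      | succ m ih =>
        intro h
        have hm : m < N := by omega
        have hadd : ((⟨m, hm⟩ : Fin N) + (1 : Fin N)) = (⟨m+1, h⟩ : Fin N) := by
          apply Fin.ext
          rw [add_val_lt (by rw [hv1]; exact h)]
          simp only [hv1]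
          try rfl
        have hg := hgap1 ⟨m, hm⟩
        rw [gap, hadd] at hg
        rw [if_pos (by simp only [hv1]; exact h)] at hg
        have : y ⟨m+1, h⟩ = y ⟨m, hm⟩ + 1/(N:ℝ) := by
          simp only [add_zero] at hg; linarith
        rw [this, ih hm]
        push_cast
        ring
    refine ⟨y ⟨0, hN0⟩, σ, fun i => ?_⟩
    have hyi : y i = y ⟨0, hN0⟩ + ((i:ℕ):ℝ)/(N:ℝ) := by
      have := hstep (i:ℕ) i.isLt
      rwa [Fin.eta] at this
    have hmem := hy01 i
    rw [hyi] at hmem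
    show y i = _
    rw [hyi, Int.fract_eq_self.2 ⟨hmem.1, hmem.2⟩]
end
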